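/- For τ > −1 and C ∈ ℝ, define I_τ(C) = ∫_0^∞ r^τ · exp(−(r + C)²/2) dr. Then for every τ > 0 the function C ↦ I_τ(C) is differentiable on ℝ, and its derivative at every C ∈ ℝ equals −I_{τ+1}(C) − C · I_τ(C), which moreover equals −τ · I_{τ−1}(C). -/

import Mathlib

set_option maxHeartbeats 1000000

open Real MeasureTheory Set Filter Topology Asymptotics

/-- `I_τ(C) = ∫_0^∞ r^τ exp(−(r+C)²/2) dr`. -/
noncomputable def Igauss (τ C : ℝ) : ℝ :=
  ∫ r in Set.Ioi (0 : ℝ), r ^ τ * Real.exp (-(r + C) ^ 2 / 2)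

lemma gauss_exp_bound {r C M : ℝ} (hC : |C| ≤ M) :
    Real.exp (-(r + C) ^ 2 / 2) ≤ Real.exp (M ^ 2) * Real.exp (-(1/4) * r ^ 2) := by
  rw [← Real.exp_add]
  apply Real.exp_le_exp.2
  obtain ⟨h1, h2⟩ := abs_le.1 hC
  nlinarith [sq_nonneg (r + 2 * C), sq_nonneg (C + M), sq_nonneg (C - M)]

lemma gauss_cont (σ C : ℝ) :
    ContinuousOn (fun r : ℝ => r ^ σ * Real.exp (-(r + C) ^ 2 / 2)) (Set.Ioi 0) := by
  apply ContinuousOn.mul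
  · exact ContinuousOn.rpow_const continuousOn_id fun x hx => Or.inl (ne_of_gt hx)
  · exact Continuous.continuousOn (by fun_prop)

lemma gauss_integrableOn {σ : ℝ} (hσ : -1 < σ) (C : ℝ) :
    IntegrableOn (fun r : ℝ => r ^ σ * Real.exp (-(r + C) ^ 2 / 2)) (Set.Ioi 0) := by
  have hbase : IntegrableOn
      (fun r : ℝ => Real.exp (|C| ^ 2) * (r ^ σ * Real.exp (-(1/4) * r ^ 2)))
      (Set.Ioi 0) :=
    (integrableOn_rpow_mul_exp_neg_mul_sq (by norm_num) hσ).const_mul _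
  refine hbase.mono' ((gauss_cont σ C).aestronglyMeasurable measurableSet_Ioi) ?_
  filter_upwards [ae_restrict_mem measurableSet_Ioi] with r hr
  have hr0 : (0:ℝ) < r := hr
  have h1 : (0:ℝ) ≤ r ^ σ := Real.rpow_nonneg hr0.le _
  rw [Real.norm_eq_abs, abs_mul, abs_of_nonneg h1, abs_of_nonneg (Real.exp_pos _).le]
  calc r ^ σ * Real.exp (-(r + C) ^ 2 / 2)
      ≤ r ^ σ * (Real.exp (|C| ^ 2) * Real.exp (-(1/4) * r ^ 2)) :=
        mul_le_mul_of_nonneg_left (gauss_exp_bound le_rfl) h1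
    _ = Real.exp (|C| ^ 2) * (r ^ σ * Real.exp (-(1/4) * r ^ 2)) := by ring

lemma gauss_inner_hasDerivAt (r C : ℝ) :
    HasDerivAt (fun C : ℝ => -(r + C) ^ 2 / 2) (-(r + C)) C := by
  have h : HasDerivAt (fun C : ℝ => r + C) 1 C := (hasDerivAt_id C).const_add r
  have h2 := (h.pow 2).neg.div_const 2
  refine h2.congr_deriv ?_
  simp
  ring

lemma gauss_hasDerivAt {τ : ℝ} (hτ : -1 < τ) (C₀ : ℝ) :
    HasDerivAt (fun C => Igauss τ C)
      (∫ r in Set.Ioi (0:ℝ), r ^ τ * (Real.exp (-(r + C₀) ^ 2 / 2) * -(r + C₀))) C₀ := by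
  set M := |C₀| + 1 with hM
  have hM0 : 0 < M := by positivity
  have key := hasDerivAt_integral_of_dominated_loc_of_deriv_le
    (F := fun C r => r ^ τ * Real.exp (-(r + C) ^ 2 / 2))
    (F' := fun C r => r ^ τ * (Real.exp (-(r + C) ^ 2 / 2) * -(r + C)))
    (μ := volume.restrict (Set.Ioi 0)) (x₀ := C₀)
    (bound := fun r => Real.exp (M ^ 2) * (r ^ (τ + 1) * Real.exp (-(1/4) * r ^ 2))
      + (M * Real.exp (M ^ 2)) * (r ^ τ * Real.exp (-(1/4) * r ^ 2)))
    (Metric.ball_mem_nhds C₀ one_pos)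
    (Filter.Eventually.of_forall fun C =>
      (gauss_cont τ C).aestronglyMeasurable measurableSet_Ioi)
    (gauss_integrableOn hτ C₀)
    ?_ ?_ ?_ ?_
  · exact key.2
  · -- F' measurable
    apply ContinuousOn.aestronglyMeasurable ?_ measurableSet_Ioi
    apply ContinuousOn.mul
    · exact ContinuousOn.rpow_const continuousOn_id fun x hx => Or.inl (ne_of_gt hx)
    · exact Continuous.continuousOn (by fun_prop)
  · -- bound
    filter_upwards [ae_restrict_mem measurableSet_Ioi] with r hr C hC
    have hr0 : (0:ℝ) < r := hr
    have hCM : |C| ≤ M := by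
      have h1 := mem_ball_iff_norm.1 hC
      rw [Real.norm_eq_abs] at h1
      calc |C| = |C₀ + (C - C₀)| := by ring_nf
        _ ≤ |C₀| + |C - C₀| := abs_add_le _ _
        _ ≤ M := by rw [hM]; linarith
    have h1 : (0:ℝ) ≤ r ^ τ := Real.rpow_nonneg hr0.le _
    have hre : |r + C| ≤ r + M := by
      have h2 := abs_le.1 hCM
      rw [abs_le]; constructor <;> [linarith; linarith]
    rw [norm_mul, norm_mul, Real.norm_eq_abs, Real.norm_eq_abs, Real.norm_eq_abs,
      abs_of_nonneg h1, abs_of_nonneg (Real.exp_pos _).le, abs_neg]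
    have hpow : r ^ (τ + 1) = r ^ τ * r := Real.rpow_add_one hr0.ne' τ
    calc r ^ τ * (Real.exp (-(r + C) ^ 2 / 2) * |r + C|)
        ≤ r ^ τ * ((Real.exp (M ^ 2) * Real.exp (-(1/4) * r ^ 2)) * (r + M)) := by
          apply mul_le_mul_of_nonneg_left ?_ h1
          exact mul_le_mul (gauss_exp_bound hCM) hre (abs_nonneg _) (by positivity)
      _ = Real.exp (M ^ 2) * (r ^ (τ + 1) * Real.exp (-(1/4) * r ^ 2))
            + (M * Real.exp (M ^ 2)) * (r ^ τ * Real.exp (-(1/4) * r ^ 2)) := by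
          rw [hpow]; ring
  · -- bound integrable
    apply Integrable.add
    · exact ((integrableOn_rpow_mul_exp_neg_mul_sq (by norm_num) (by linarith)).const_mul _)
    · exact ((integrableOn_rpow_mul_exp_neg_mul_sq (by norm_num) hτ).const_mul _)
  · -- differentiability
    refine Filter.Eventually.of_forall fun r C _ => ?_
    exact ((gauss_inner_hasDerivAt r C).exp).const_mul _

theorem Igauss_differentiable (τ : ℝ) (hτ : 0 < τ) :
    Differentiable ℝ (fun C => Igauss τ C) ∧
      ∀ C : ℝ,
        deriv (fun C => Igauss τ C) C = -Igauss (τ + 1) C - C * Igauss τ C ∧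
          -Igauss (τ + 1) C - C * Igauss τ C = -τ * Igauss (τ - 1) C := by
  have hτ1 : (-1 : ℝ) < τ := by linarith
  have hderiv : ∀ C : ℝ, HasDerivAt (fun C => Igauss τ C)
      (-Igauss (τ + 1) C - C * Igauss τ C) C := by
    intro C
    have h := gauss_hasDerivAt hτ1 C
    have heq : (∫ r in Set.Ioi (0:ℝ), r ^ τ * (Real.exp (-(r + C) ^ 2 / 2) * -(r + C)))
        = -Igauss (τ + 1) C - C * Igauss τ C := by
      have hcongr : Set.EqOn
          (fun r : ℝ => r ^ τ * (Real.exp (-(r + C) ^ 2 / 2) * -(r + C)))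
          (fun r : ℝ => (-1) * (r ^ (τ + 1) * Real.exp (-(r + C) ^ 2 / 2))
            + (-C) * (r ^ τ * Real.exp (-(r + C) ^ 2 / 2))) (Set.Ioi 0) := by
        intro r hr
        have hpow : r ^ (τ + 1) = r ^ τ * r := Real.rpow_add_one (ne_of_gt hr) τ
        simp only [hpow]
        ring
      rw [setIntegral_congr_fun measurableSet_Ioi hcongr,
        integral_add ((gauss_integrableOn (by linarith) C).const_mul (-1))
          ((gauss_integrableOn hτ1 C).const_mul (-C)),
        integral_const_mul, integral_const_mul]
      simp only [Igauss]
      ring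
    rw [heq] at h
    exact h
  refine ⟨fun C => (hderiv C).differentiableAt, fun C => ⟨(hderiv C).deriv, ?_⟩⟩
  -- integration by parts identity
  set g : ℝ → ℝ := fun r => r ^ τ * Real.exp (-(r + C) ^ 2 / 2) with hg
  have hgderiv : ∀ r ∈ Set.Ioi (0:ℝ), HasDerivAt g
      (τ * (r ^ (τ - 1) * Real.exp (-(r + C) ^ 2 / 2))
        + ((-1) * (r ^ (τ + 1) * Real.exp (-(r + C) ^ 2 / 2))
          + (-C) * (r ^ τ * Real.exp (-(r + C) ^ 2 / 2)))) r := by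
    intro r hr
    have hr0 : (0:ℝ) < r := hr
    have h1 : HasDerivAt (fun r : ℝ => r ^ τ) (τ * r ^ (τ - 1)) r :=
      Real.hasDerivAt_rpow_const (Or.inl hr0.ne')
    have h2 : HasDerivAt (fun r : ℝ => Real.exp (-(r + C) ^ 2 / 2))
        (Real.exp (-(r + C) ^ 2 / 2) * -(r + C)) r := by
      have h3 : HasDerivAt (fun r : ℝ => -(r + C) ^ 2 / 2) (-(r + C)) r := by
        have h : HasDerivAt (fun r : ℝ => r + C) 1 r := (hasDerivAt_id r).add_const C
        have h4 := (h.pow 2).neg.div_const 2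
        refine h4.congr_deriv ?_
        simp
        ring
      exact h3.exp
    have := h1.mul h2
    refine this.congr_deriv ?_
    rw [Real.rpow_add_one hr0.ne' τ]
    ring
  have hint : IntegrableOn (fun r : ℝ =>
      τ * (r ^ (τ - 1) * Real.exp (-(r + C) ^ 2 / 2))
        + ((-1) * (r ^ (τ + 1) * Real.exp (-(r + C) ^ 2 / 2))
          + (-C) * (r ^ τ * Real.exp (-(r + C) ^ 2 / 2)))) (Set.Ioi 0) := by
    exact ((gauss_integrableOn (by linarith) C).const_mul τ).add
      (((gauss_integrableOn (by linarith) C).const_mul (-1)).add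
        ((gauss_integrableOn hτ1 C).const_mul (-C)))
  have hcont0 : ContinuousWithinAt g (Set.Ici 0) 0 := by
    apply ContinuousAt.continuousWithinAt
    exact (Real.continuousAt_rpow_const 0 τ (Or.inr hτ.le)).mul (by fun_prop)
  have htends : Tendsto g atTop (𝓝 0) := by
    have hb : Tendsto (fun r : ℝ =>
        Real.exp (|C| ^ 2) * (r ^ τ * Real.exp (-(1/4) * r ^ 2))) atTop (𝓝 0) := by
      have hg0 : Tendsto (fun x : ℝ => Real.exp (-(1/2) * x)) atTop (𝓝 0) := by
        have h : Tendsto (fun x : ℝ => (1/2) * x) atTop atTop :=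
          (tendsto_id (α := ℝ)).const_mul_atTop (show (0:ℝ) < 1/2 by norm_num)
        have hlin : Tendsto (fun x : ℝ => -(1/2) * x) atTop atBot := by
          have heq : (fun x : ℝ => -(1/2) * x) = (fun y : ℝ => -y) ∘ (fun x : ℝ => (1/2) * x) := by
            funext x; simp [Function.comp]
          rw [heq]
          exact tendsto_neg_atTop_atBot.comp h
        have heq2 : (fun x : ℝ => Real.exp (-(1/2) * x)) = Real.exp ∘ (fun x : ℝ => -(1/2) * x) := rfl
        rw [heq2]
        exact Real.tendsto_exp_atBot.comp hlin
      have h0 := (rpow_mul_exp_neg_mul_sq_isLittleO_exp_neg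
        (by norm_num : (0:ℝ) < 1/4) τ).tendsto_zero_of_tendsto hg0
      have h1 := (tendsto_const_nhds (x := Real.exp (|C| ^ 2)) (f := atTop)).mul h0
      rw [mul_zero] at h1
      exact h1
    apply squeeze_zero' ?_ ?_ hb
    · filter_upwards [eventually_gt_atTop (0:ℝ)] with r hr
      have : (0:ℝ) ≤ r ^ τ := Real.rpow_nonneg hr.le _
      positivity
    · filter_upwards [eventually_gt_atTop (0:ℝ)] with r hr
      calc g r ≤ r ^ τ * (Real.exp (|C| ^ 2) * Real.exp (-(1/4) * r ^ 2)) :=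
            mul_le_mul_of_nonneg_left (gauss_exp_bound le_rfl) (Real.rpow_nonneg hr.le _)
        _ = Real.exp (|C| ^ 2) * (r ^ τ * Real.exp (-(1/4) * r ^ 2)) := by ring
  have hFTC := integral_Ioi_of_hasDerivAt_of_tendsto hcont0 hgderiv hint htends
  have hg0 : g 0 = 0 := by
    simp [hg, Real.zero_rpow hτ.ne']
  have hA : IntegrableOn (fun r : ℝ => τ * (r ^ (τ - 1) * Real.exp (-(r + C) ^ 2 / 2)))
      (Set.Ioi 0) := (gauss_integrableOn (by linarith) C).const_mul τ
  have hB : IntegrableOn (fun r : ℝ => -1 * (r ^ (τ + 1) * Real.exp (-(r + C) ^ 2 / 2)))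
      (Set.Ioi 0) := (gauss_integrableOn (by linarith) C).const_mul (-1)
  have hC2 : IntegrableOn (fun r : ℝ => -C * (r ^ τ * Real.exp (-(r + C) ^ 2 / 2)))
      (Set.Ioi 0) := (gauss_integrableOn hτ1 C).const_mul (-C)
  have hBC : IntegrableOn (fun r : ℝ => -1 * (r ^ (τ + 1) * Real.exp (-(r + C) ^ 2 / 2))
      + -C * (r ^ τ * Real.exp (-(r + C) ^ 2 / 2))) (Set.Ioi 0) := hB.add hC2
  rw [hg0, sub_zero, integral_add hA hBC, integral_add hB hC2,
    integral_const_mul, integral_const_mul, integral_const_mul] at hFTC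
  have hI1 : Igauss (τ - 1) C = ∫ r in Set.Ioi (0:ℝ), r ^ (τ - 1) * Real.exp (-(r + C) ^ 2 / 2) := rfl
  have hI2 : Igauss (τ + 1) C = ∫ r in Set.Ioi (0:ℝ), r ^ (τ + 1) * Real.exp (-(r + C) ^ 2 / 2) := rfl
  have hI3 : Igauss τ C = ∫ r in Set.Ioi (0:ℝ), r ^ τ * Real.exp (-(r + C) ^ 2 / 2) := rfl
  rw [hI1, hI2, hI3]
  linarith [hFTC]
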